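/- Let 𝐌 be an n×n matrix with entries in 𝕂, and set v_{ij} := val(𝐌_{ij}) ∈ ℝ∪{−∞}. Suppose that the maximum over all permutations σ of {1,…,n} of Σ_{i=1}^n v_{i σ(i)} is not −∞ and is attained at exactly one permutation σ*. Then det 𝐌 ≠ 0, val(det 𝐌) = Σ_{i=1}^n v_{i σ*(i)}, and the leading coefficient of det 𝐌 equals sgn(σ*)·∏_{i=1}^n lc(𝐌_{i σ*(i)}). -/

import Mathlib

/-!
Expand `det M = ∑_σ sgn(σ) ∏ᵢ M i (σ i)`. The valuation of the term of `σ` is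
`∑ᵢ val (M i (σ i))`, so the hypothesis says that the term of `σ*` strictly dominates all the
others. In a finite sum of Hahn series with a strictly dominant nonzero term, the remaining terms
have no coefficient at or above the dominant exponent, so the sum has the valuation and the
leading coefficient of that term.
-/

/-- The field of generalized real Puiseux series: Hahn series over `ℝ`
whose exponent group is `ℝ` with the reversed order (so supports have a
largest real exponent). -/
abbrev PSeries : Type := HahnSeries ℝᵒᵈ ℝ

open Classical in
/-- The valuation of a generalized Puiseux series: its largest exponent,
with `val 0 = ⊥ = -∞`. -/
noncomputable def pval (x : PSeries) : WithBot ℝ :=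
  if x = 0 then ⊥ else ((OrderDual.ofDual x.order : ℝ) : WithBot ℝ)

/-- The leading coefficient of a generalized Puiseux series: the coefficient
of `t ^ val x`. -/
noncomputable def plc (x : PSeries) : ℝ := x.coeff x.order

namespace HahnSeries

variable {Γ R ι : Type*} [LinearOrder Γ] [AddCommMonoid R]

theorem lt_orderTop_sum {s : Finset ι} {f : ι → HahnSeries Γ R} {a : WithTop Γ} (ha : a < ⊤)
    (hf : ∀ i ∈ s, a < (f i).orderTop) : a < (∑ i ∈ s, f i).orderTop := by
  induction s using Finset.cons_induction with
  | empty => simpa using ha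
  | cons j s hj ih =>
    rw [Finset.sum_cons]
    refine (lt_min (hf j (Finset.mem_cons_self j s)) (ih fun i hi => ?_)).trans_le
      min_orderTop_le_orderTop_add
    exact hf i (Finset.mem_cons_of_mem hi)

variable {s : Finset ι} {f : ι → HahnSeries Γ R} {j : ι}

theorem orderTop_lt_orderTop_sum_erase [DecidableEq ι] (hj0 : f j ≠ 0)
    (hf : ∀ i ∈ s, i ≠ j → (f j).orderTop < (f i).orderTop) :
    (f j).orderTop < (∑ i ∈ s.erase j, f i).orderTop :=
  lt_orderTop_sum (orderTop_lt_top.mpr hj0) fun i hi => hf i (Finset.mem_of_mem_erase hi)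
    (Finset.ne_of_mem_erase hi)

theorem orderTop_sum_of_dominant (hj : j ∈ s) (hj0 : f j ≠ 0)
    (hf : ∀ i ∈ s, i ≠ j → (f j).orderTop < (f i).orderTop) :
    (∑ i ∈ s, f i).orderTop = (f j).orderTop := by
  classical
  rw [← Finset.add_sum_erase s f hj]
  exact orderTop_add_eq_left (orderTop_lt_orderTop_sum_erase hj0 hf)

theorem leadingCoeff_sum_of_dominant (hj : j ∈ s) (hj0 : f j ≠ 0)
    (hf : ∀ i ∈ s, i ≠ j → (f j).orderTop < (f i).orderTop) :
    (∑ i ∈ s, f i).leadingCoeff = (f j).leadingCoeff := by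
  classical
  rw [← Finset.add_sum_erase s f hj]
  exact leadingCoeff_add_eq_left (orderTop_lt_orderTop_sum_erase hj0 hf)

end HahnSeries

lemma pval_eq_ofDual_orderTop (x : PSeries) : pval x = WithTop.ofDual x.orderTop := by
  by_cases hx : x = 0
  · simp [pval, hx]
  · rw [pval, if_neg hx, ← HahnSeries.order_eq_orderTop_of_ne_zero hx]
    rfl

lemma pval_lt_pval_iff {x y : PSeries} : pval x < pval y ↔ y.orderTop < x.orderTop := by
  rw [pval_eq_ofDual_orderTop, pval_eq_ofDual_orderTop, WithTop.ofDual_lt_ofDual_iff]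

lemma pval_ne_bot_iff {x : PSeries} : pval x ≠ ⊥ ↔ x ≠ 0 := by
  simp [pval]

lemma plc_eq_leadingCoeff (x : PSeries) : plc x = x.leadingCoeff :=
  HahnSeries.leadingCoeff_eq.symm

lemma pval_mul (x y : PSeries) : pval (x * y) = pval x + pval y := by
  by_cases hx : x = 0
  · simp [hx, pval]
  by_cases hy : y = 0
  · simp [hy, pval]
  simp only [pval, if_neg hx, if_neg hy, if_neg (mul_ne_zero hx hy),
    HahnSeries.order_mul hx hy]
  rfl

lemma pval_prod {ι : Type*} (s : Finset ι) (f : ι → PSeries) :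
    pval (∏ i ∈ s, f i) = ∑ i ∈ s, pval (f i) := by
  induction s using Finset.cons_induction with
  | empty => simp [pval, HahnSeries.order_one]
  | cons a s ha ih => rw [Finset.prod_cons, Finset.sum_cons, pval_mul, ih]

lemma plc_prod {ι : Type*} (s : Finset ι) (f : ι → PSeries) :
    plc (∏ i ∈ s, f i) = ∏ i ∈ s, plc (f i) := by
  simp only [plc_eq_leadingCoeff]
  induction s using Finset.cons_induction with
  | empty => simp
  | cons a s ha ih => rw [Finset.prod_cons, Finset.prod_cons, HahnSeries.leadingCoeff_mul, ih]

lemma pval_units_int_smul (u : ℤˣ) (x : PSeries) : pval (u • x) = pval x := by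
  rcases Int.units_eq_one_or u with rfl | rfl
  · rw [one_smul]
  · rw [pval_eq_ofDual_orderTop, pval_eq_ofDual_orderTop, Units.neg_smul, one_smul,
      HahnSeries.orderTop_neg]

lemma plc_units_int_smul (u : ℤˣ) (x : PSeries) : plc (u • x) = ((u : ℤ) : ℝ) * plc x := by
  rcases Int.units_eq_one_or u with rfl | rfl
  · simp
  · simp [plc_eq_leadingCoeff, HahnSeries.leadingCoeff_neg]

lemma Matrix.det_eq_sum_sign_smul_prod {n R : Type*} [DecidableEq n] [Fintype n] [CommRing R]
    (M : Matrix n n R) :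
    M.det = ∑ σ : Equiv.Perm n, Equiv.Perm.sign σ • ∏ i, M i (σ i) := by
  rw [← M.det_transpose, Matrix.det_apply]
  rfl

/-- if the assignment maximum `max_σ ∑ i, val (M i (σ i))` over the
permutations of `{1,…,n}` is not `-∞` and is attained at a unique permutation `σ*`,
then `det M ≠ 0`, `val (det M) = ∑ i, val (M i (σ* i))`, and the leading coefficient
of `det M` is `sgn(σ*) * ∏ i, lc (M i (σ* i))`. -/
theorem stmt1 {n : ℕ} (M : Matrix (Fin n) (Fin n) PSeries) (σstar : Equiv.Perm (Fin n))
    (hne : (∑ i, pval (M i (σstar i))) ≠ ⊥)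
    (hmax : ∀ σ : Equiv.Perm (Fin n), σ ≠ σstar →
      ∑ i, pval (M i (σ i)) < ∑ i, pval (M i (σstar i))) :
    M.det ≠ 0 ∧
    pval M.det = ∑ i, pval (M i (σstar i)) ∧
    plc M.det = ((Equiv.Perm.sign σstar : ℤ) : ℝ) * ∏ i, plc (M i (σstar i)) := by
  set T : Equiv.Perm (Fin n) → PSeries := fun σ => Equiv.Perm.sign σ • ∏ i, M i (σ i)
  have hdet : M.det = ∑ σ, T σ := M.det_eq_sum_sign_smul_prod
  have hpvalT (σ) : pval (T σ) = ∑ i, pval (M i (σ i)) := by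
    rw [pval_units_int_smul, pval_prod]
  have hT0 : T σstar ≠ 0 := pval_ne_bot_iff.mp (hpvalT σstar ▸ hne)
  have hdom : ∀ σ ∈ Finset.univ, σ ≠ σstar → (T σstar).orderTop < (T σ).orderTop :=
    fun σ _ hσ => pval_lt_pval_iff.mp (by rw [hpvalT, hpvalT]; exact hmax σ hσ)
  have hval : pval M.det = ∑ i, pval (M i (σstar i)) := by
    rw [← hpvalT, pval_eq_ofDual_orderTop, pval_eq_ofDual_orderTop, hdet,
      HahnSeries.orderTop_sum_of_dominant (Finset.mem_univ _) hT0 hdom]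
  refine ⟨pval_ne_bot_iff.mp (hval ▸ hne), hval, ?_⟩
  rw [plc_eq_leadingCoeff, hdet,
    HahnSeries.leadingCoeff_sum_of_dominant (Finset.mem_univ _) hT0 hdom,
    ← plc_eq_leadingCoeff, plc_units_int_smul, plc_prod]
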